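/- arXiv:2205.08925 — 2 statements merged into one kernel-verified Lean document; each statement's English description precedes it below -/
import Mathlib

section
/- In a linear structural equation model $X_j \leftarrow \Psi_j + \sum_{k \in \mathrm{PA}(j)} \theta_{j,k} X_k$ with independent centered noise variables $\Psi_1,\ldots,\Psi_p$ (finite positive variances, invertible covariance of $X$), for any measurable $f$ with $E\{f(X_j)^2\}<\infty$, the population OLS coefficient $\beta^{f,j} = E(XX^\top)^{-1}E\{Xf(X_j)\}$ satisfies $\beta^{f,j}_k = 0$ for every $k \notin \mathrm{AN}(j) \cup \{j\}$, where $\mathrm{AN}(j)$ denotes the ancestors of $j$. -/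
/-!
Since the graph is acyclic, the structural equations can be solved recursively: `X = ω Ψ`
almost surely, where row `j` of `ω` is supported on `j` and its ancestors. With `D` the diagonal
matrix of noise variances, `E(XXᵀ)(I - Θ)ᵀ = E(XΨᵀ) = ω D` and `E{X f(X_j)} = ω c` with
`c_l = E{Ψ_l f(X_j)}`, so `β = (I - Θ)ᵀ D⁻¹ c`, i.e. `β_k = c_k / D_k - Σ_r θ_{r,k} c_r / D_r`.
Now `c_r = 0` unless `r` is `j` or an ancestor of `j`, because `f(X_j)` is then a function of
noises independent of the centred `Ψ_r`; and if `k` is not an ancestor of `j`, neither is any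
child `r` of `k`.
-/

open MeasureTheory ProbabilityTheory Matrix

theorem Relation.wellFounded_of_forall_not_transGen_self {ι : Type*} [Finite ι]
    {E : ι → ι → Prop} (hacyc : ∀ v, ¬ Relation.TransGen E v v) : WellFounded E :=
  haveI : IsTrans ι (Relation.TransGen E) := ⟨fun _ _ _ => Relation.TransGen.trans⟩
  haveI : Std.Irrefl (Relation.TransGen E) := ⟨hacyc⟩
  Subrelation.wf Relation.TransGen.single (Finite.wellFounded_of_trans_of_irrefl _)

theorem exists_reducedForm_of_acyclic {ι : Type*} [Fintype ι] [DecidableEq ι]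
    {E : ι → ι → Prop} (hacyc : ∀ v, ¬ Relation.TransGen E v v)
    {θ : Matrix ι ι ℝ} (hθ : ∀ i k, θ i k ≠ 0 → E k i) :
    ∃ w : Matrix ι ι ℝ, (∀ i l, w i l ≠ 0 → Relation.ReflTransGen E l i) ∧
      ∀ x ψ : ι → ℝ, x = ψ + θ *ᵥ x → x = w *ᵥ ψ := by
  suffices h : ∀ i, ∃ u : ι → ℝ, (∀ l, u l ≠ 0 → Relation.ReflTransGen E l i) ∧
      ∀ x ψ : ι → ℝ, x = ψ + θ *ᵥ x → x i = u ⬝ᵥ ψ by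
    choose w hw_anc hw_solve using h
    exact ⟨w, hw_anc, fun x ψ hx => funext fun i => hw_solve i x ψ hx⟩
  intro i
  induction i using (Relation.wellFounded_of_forall_not_transGen_self hacyc).induction with
  | _ i IH =>
    have H : ∀ k, ∃ u : ι → ℝ, θ i k ≠ 0 → (∀ l, u l ≠ 0 → Relation.ReflTransGen E l k) ∧
        ∀ x ψ : ι → ℝ, x = ψ + θ *ᵥ x → x k = u ⬝ᵥ ψ := by
      intro k
      by_cases hk : θ i k = 0
      · exact ⟨0, fun h => absurd hk h⟩
      · obtain ⟨u, hu⟩ := IH k (hθ i k hk)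
        exact ⟨u, fun _ => hu⟩
    choose U hU using H
    refine ⟨Pi.single i 1 + ∑ k, θ i k • U k, fun l hl => ?_, fun x ψ hx => ?_⟩
    · by_cases hli : l = i
      · exact hli ▸ Relation.ReflTransGen.refl
      obtain ⟨k, -, hk⟩ := Finset.exists_ne_zero_of_sum_ne_zero (by simpa [hli] using hl)
      have hθk : θ i k ≠ 0 := left_ne_zero_of_mul hk
      exact ((hU k hθk).1 l (right_ne_zero_of_mul hk)).tail (hθ i k hθk)
    · have hparents : ∑ k, θ i k * x k = ∑ k, θ i k * (U k ⬝ᵥ ψ) := by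
        refine Finset.sum_congr rfl fun k _ => ?_
        by_cases hk : θ i k = 0
        · simp [hk]
        · rw [(hU k hk).2 x ψ hx]
      have hxi : x i = ψ i + ∑ k, θ i k * x k := congrFun hx i
      simp only [hxi, hparents, add_dotProduct, single_one_dotProduct, sum_dotProduct,
        smul_dotProduct, smul_eq_mul]

theorem Matrix.inv_mulVec_mulVec_of_mul_eq_mul_diagonal {n K : Type*} [Fintype n] [DecidableEq n]
    [Field K] {S A w : Matrix n n K} {d : n → K} (hS : IsUnit S.det) (hd : ∀ i, d i ≠ 0)
    (h : S * A = w * diagonal d) (c : n → K) : S⁻¹ *ᵥ (w *ᵥ c) = A *ᵥ fun i => c i / d i := by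
  have hSA : S *ᵥ (A *ᵥ fun i => c i / d i) = w *ᵥ c := by
    rw [mulVec_mulVec, h, ← mulVec_mulVec]
    congr 1
    funext i
    rw [mulVec_diagonal, mul_div_cancel₀ _ (hd i)]
  rw [← hSA, mulVec_mulVec, nonsing_inv_mul _ hS, one_mulVec]

theorem one_sub_transpose_mulVec_apply_eq_zero {ι R : Type*} [Fintype ι] [DecidableEq ι] [Ring R]
    {E : ι → ι → Prop} {θ : Matrix ι ι R} (hθ : ∀ i k, θ i k ≠ 0 → E k i) {u : ι → R} {j : ι}
    (hu : ∀ r, ¬ Relation.ReflTransGen E r j → u r = 0) {k : ι}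
    (hk : ¬ Relation.ReflTransGen E k j) : ((1 - θ)ᵀ *ᵥ u) k = 0 := by
  refine Finset.sum_eq_zero fun r _ => ?_
  by_cases hkr : Relation.ReflTransGen E k r
  · rw [hu r fun hrj => hk (hkr.trans hrj), mul_zero]
  · have hrk : r ≠ k := fun h => hkr (h ▸ .refl)
    have hθrk : θ r k = 0 := not_imp_comm.1 (fun h => .single (hθ r k h)) hkr
    simp [one_apply_ne hrk, hθrk]

section CrossMoment

variable {Ω : Type*} [MeasurableSpace Ω] {μ : Measure Ω} {m n o : Type*}

noncomputable def crossMoment (μ : Measure Ω) (Y : Ω → m → ℝ) (Z : Ω → n → ℝ) : Matrix m n ℝ :=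
  Matrix.of fun i l => ∫ a, Y a i * Z a l ∂μ

theorem memLp_mulVec_apply [Fintype n] {p : ENNReal} {Y : Ω → n → ℝ}
    (hY : ∀ l, MemLp (fun a => Y a l) p μ) (A : Matrix m n ℝ) (i : m) :
    MemLp (fun a => (A *ᵥ Y a) i) p μ :=
  memLp_finsetSum _ fun l _ => (hY l).const_mul (A i l)

theorem integral_mulVec_apply_mul [Fintype n] {Y : Ω → n → ℝ}
    (hY : ∀ l, MemLp (fun a => Y a l) 2 μ) {g : Ω → ℝ} (hg : MemLp g 2 μ) (A : Matrix m n ℝ) :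
    (fun i => ∫ a, (A *ᵥ Y a) i * g a ∂μ) = A *ᵥ fun l => ∫ a, Y a l * g a ∂μ := by
  funext i
  calc ∫ a, (A *ᵥ Y a) i * g a ∂μ = ∫ a, ∑ l, A i l * (Y a l * g a) ∂μ := by
        simp only [mulVec, dotProduct, Finset.sum_mul, mul_assoc]
    _ = ∑ l, ∫ a, A i l * (Y a l * g a) ∂μ :=
        integral_finsetSum _ fun l _ => ((hY l).integrable_mul hg).const_mul (A i l)
    _ = (A *ᵥ fun l => ∫ a, Y a l * g a ∂μ) i := by simp only [integral_const_mul]; rfl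

theorem crossMoment_transpose (Y : Ω → m → ℝ) (Z : Ω → n → ℝ) :
    (crossMoment μ Y Z)ᵀ = crossMoment μ Z Y := by
  ext i l
  simp only [crossMoment, transpose_apply, of_apply, mul_comm]

theorem crossMoment_mulVec_left [Fintype n] {Y : Ω → n → ℝ} {Z : Ω → o → ℝ}
    (hY : ∀ l, MemLp (fun a => Y a l) 2 μ) (hZ : ∀ l, MemLp (fun a => Z a l) 2 μ)
    (A : Matrix m n ℝ) : crossMoment μ (fun a => A *ᵥ Y a) Z = A * crossMoment μ Y Z := by
  ext i l
  exact congrFun (integral_mulVec_apply_mul hY (hZ l) A) i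

theorem crossMoment_mulVec_right [Fintype n] {Y : Ω → m → ℝ} {Z : Ω → n → ℝ}
    (hY : ∀ l, MemLp (fun a => Y a l) 2 μ) (hZ : ∀ l, MemLp (fun a => Z a l) 2 μ)
    (A : Matrix o n ℝ) : crossMoment μ Y (fun a => A *ᵥ Z a) = crossMoment μ Y Z * Aᵀ := by
  rw [← crossMoment_transpose, crossMoment_mulVec_left hZ hY, transpose_mul,
    crossMoment_transpose]

theorem crossMoment_congr_ae {Y Y' : Ω → m → ℝ} {Z Z' : Ω → n → ℝ} (hY : Y =ᵐ[μ] Y')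
    (hZ : Z =ᵐ[μ] Z') : crossMoment μ Y Z = crossMoment μ Y' Z' := by
  ext i l
  exact integral_congr_ae <| by filter_upwards [hY, hZ] with a hYa hZa; rw [hYa, hZa]

end CrossMoment

section IndependentNoise

variable {Ω : Type*} [MeasurableSpace Ω] {μ : Measure Ω} {ι : Type*} {Ψ : ι → Ω → ℝ}

theorem crossMoment_eq_diagonal_of_iIndepFun [DecidableEq ι] (hindep : iIndepFun Ψ μ)
    (hmeas : ∀ l, Measurable (Ψ l)) (hcent : ∀ l, ∫ a, Ψ l a ∂μ = 0) :
    crossMoment μ (fun a l => Ψ l a) (fun a l => Ψ l a) =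
      diagonal fun l => ∫ a, Ψ l a ^ 2 ∂μ := by
  ext l r
  by_cases hlr : l = r
  · subst hlr
    simp [crossMoment, sq]
  · rw [diagonal_apply_ne _ hlr, crossMoment, of_apply,
      (hindep.indepFun hlr).integral_fun_mul_eq_mul_integral (hmeas l).aestronglyMeasurable
        (hmeas r).aestronglyMeasurable, hcent l, zero_mul]

theorem integral_mul_comp_dotProduct_eq_zero [Fintype ι] [DecidableEq ι]
    (hindep : iIndepFun Ψ μ) (hmeas : ∀ l, Measurable (Ψ l)) {l : ι} (hcent : ∫ a, Ψ l a ∂μ = 0)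
    {u : ι → ℝ} (hu : u l = 0) {f : ℝ → ℝ} (hf : Measurable f) :
    ∫ a, Ψ l a * f (u ⬝ᵥ fun r => Ψ r a) ∂μ = 0 := by
  set S := Finset.univ.erase l
  have hdot : ∀ a, (u ⬝ᵥ fun r => Ψ r a) = ∑ r : S, u r * Ψ r a := fun a => by
    rw [Finset.sum_coe_sort S fun r => u r * Ψ r a, dotProduct,
      ← Finset.add_sum_erase _ _ (Finset.mem_univ l), hu, zero_mul, zero_add]
  have hindep' : IndepFun (Ψ l) (fun a => f (u ⬝ᵥ fun r => Ψ r a)) μ := by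
    have hF : Measurable fun v : S → ℝ => f (∑ r : S, u r * v r) := hf.comp (by fun_prop)
    have h := (hindep.indepFun_finset {l} S (by simp [S]) hmeas).comp
      (measurable_pi_apply ⟨l, Finset.mem_singleton_self l⟩) hF
    simpa [Function.comp_def, hdot] using h
  rw [hindep'.integral_fun_mul_eq_mul_integral (hmeas l).aestronglyMeasurable
    (hf.comp (Finset.measurable_sum _ fun r _ => (hmeas r).const_mul (u r))).aestronglyMeasurable,
    hcent, zero_mul]

end IndependentNoise

section LinearSEM

variable {Ω : Type*} [MeasurableSpace Ω] {μ : Measure Ω} {ι : Type*} [Fintype ι]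
  {Ψ X : ι → Ω → ℝ}

theorem ae_eq_mulVec_of_reducedForm {θ w : Matrix ι ι ℝ}
    (hSEM : ∀ i, ∀ᵐ a ∂μ, X i a = Ψ i a + ∑ k, θ i k * X k a)
    (hw : ∀ x ψ : ι → ℝ, x = ψ + θ *ᵥ x → x = w *ᵥ ψ) :
    (fun a i => X i a) =ᵐ[μ] fun a => w *ᵥ fun l => Ψ l a := by
  filter_upwards [ae_all_iff.2 hSEM] with a ha
  exact hw _ _ (funext ha)

theorem ae_eq_one_sub_mulVec [DecidableEq ι] {θ : Matrix ι ι ℝ}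
    (hSEM : ∀ i, ∀ᵐ a ∂μ, X i a = Ψ i a + ∑ k, θ i k * X k a) :
    (fun a i => Ψ i a) =ᵐ[μ] fun a => (1 - θ) *ᵥ fun l => X l a := by
  filter_upwards [ae_all_iff.2 hSEM] with a ha
  funext i
  rw [sub_mulVec, one_mulVec, Pi.sub_apply, ha i]
  exact (add_sub_cancel_right _ _).symm

theorem crossMoment_mul_one_sub_transpose [DecidableEq ι] {θ w : Matrix ι ι ℝ}
    (hindep : iIndepFun Ψ μ) (hmeas : ∀ l, Measurable (Ψ l)) (hcent : ∀ l, ∫ a, Ψ l a ∂μ = 0)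
    (hL2 : ∀ l, MemLp (Ψ l) 2 μ)
    (hX : (fun a i => X i a) =ᵐ[μ] fun a => w *ᵥ fun l => Ψ l a)
    (hΨ : (fun a i => Ψ i a) =ᵐ[μ] fun a => (1 - θ) *ᵥ fun l => X l a) :
    crossMoment μ (fun a i => X i a) (fun a i => X i a) * (1 - θ)ᵀ =
      w * diagonal fun l => ∫ a, Ψ l a ^ 2 ∂μ := by
  have hXL2 : ∀ i, MemLp (X i) 2 μ := fun i =>
    (memLp_mulVec_apply hL2 w i).ae_eq (hX.mono fun a ha => (congrFun ha i).symm)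
  rw [← crossMoment_mulVec_right hXL2 hXL2, crossMoment_congr_ae hX hΨ.symm,
    crossMoment_mulVec_left hL2 hL2, crossMoment_eq_diagonal_of_iIndepFun hindep hmeas hcent]

theorem integral_mul_eq_mulVec_integral {w : Matrix ι ι ℝ} (hL2 : ∀ l, MemLp (Ψ l) 2 μ)
    (hX : (fun a i => X i a) =ᵐ[μ] fun a => w *ᵥ fun l => Ψ l a) {g : Ω → ℝ}
    (hg : MemLp g 2 μ) :
    (fun i => ∫ a, X i a * g a ∂μ) = w *ᵥ fun l => ∫ a, Ψ l a * g a ∂μ := by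
  rw [← integral_mulVec_apply_mul hL2 hg]
  funext i
  refine integral_congr_ae ?_
  filter_upwards [hX] with a ha
  rw [show X i a = _ from congrFun ha i]

theorem integral_noise_mul_comp_eq_zero [DecidableEq ι] {w : Matrix ι ι ℝ}
    (hindep : iIndepFun Ψ μ) (hmeas : ∀ l, Measurable (Ψ l)) (hcent : ∀ l, ∫ a, Ψ l a ∂μ = 0)
    (hX : (fun a i => X i a) =ᵐ[μ] fun a => w *ᵥ fun l => Ψ l a) {j r : ι} (hw : w j r = 0)
    {f : ℝ → ℝ} (hf : Measurable f) : ∫ a, Ψ r a * f (X j a) ∂μ = 0 := by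
  rw [← integral_mul_comp_dotProduct_eq_zero hindep hmeas (hcent r) hw hf]
  refine integral_congr_ae ?_
  filter_upwards [hX] with a ha
  rw [show X j a = _ from congrFun ha j]
  rfl

end LinearSEM

theorem ancestor_regression_nonancestor_zero_general
    {Ω : Type*} [MeasurableSpace Ω] (μ : Measure Ω)
    (p : ℕ) (E : Fin p → Fin p → Prop)
    (hacyc : ∀ v, ¬ Relation.TransGen E v v)
    (θ : Fin p → Fin p → ℝ)
    (hθ : ∀ j k, θ j k ≠ 0 → E k j)
    (Ψ X : Fin p → Ω → ℝ)
    (hΨmeas : ∀ l, Measurable (Ψ l))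
    (hindep : iIndepFun Ψ μ)
    (hcent : ∀ l, ∫ a, Ψ l a ∂μ = 0)
    (hL2 : ∀ l, MemLp (Ψ l) 2 μ)
    (hvarpos : ∀ l, 0 < ∫ a, (Ψ l a) ^ 2 ∂μ)
    (hSEM : ∀ i, ∀ᵐ a ∂μ, X i a = Ψ i a + ∑ k, θ i k * X k a)
    (Sx : Matrix (Fin p) (Fin p) ℝ)
    (hS : Sx = Matrix.of fun i l => ∫ a, X i a * X l a ∂μ)
    (hSinv : IsUnit Sx.det)
    (j : Fin p) (f : ℝ → ℝ) (hf : Measurable f)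
    (hfL2 : MemLp (fun a => f (X j a)) 2 μ)
    (k : Fin p) (hkj : k ≠ j) (hkanc : ¬ Relation.TransGen E k j) :
    Sx⁻¹.mulVec (fun i => ∫ a, X i a * f (X j a) ∂μ) k = 0 := by
  obtain ⟨w, hw_anc, hw_solve⟩ := exists_reducedForm_of_acyclic hacyc (θ := Matrix.of θ) hθ
  have hX := ae_eq_mulVec_of_reducedForm hSEM hw_solve
  have hcov : Sx * (1 - Matrix.of θ)ᵀ = w * diagonal fun l => ∫ a, Ψ l a ^ 2 ∂μ :=
    hS ▸ crossMoment_mul_one_sub_transpose hindep hΨmeas hcent hL2 hX (ae_eq_one_sub_mulVec hSEM)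
  rw [integral_mul_eq_mulVec_integral hL2 hX hfL2,
    inv_mulVec_mulVec_of_mul_eq_mul_diagonal hSinv (fun l => (hvarpos l).ne') hcov]
  have hk : ¬ Relation.ReflTransGen E k j :=
    Relation.reflTransGen_iff_eq_or_transGen.not.2 (not_or.2 ⟨hkj.symm, hkanc⟩)
  refine one_sub_transpose_mulVec_apply_eq_zero hθ (fun r hrj => ?_) hk
  rw [integral_noise_mul_comp_eq_zero hindep hΨmeas hcent hX
    (not_imp_comm.1 (hw_anc j r) hrj) hf, zero_div]

/-- Theorem 1: In a linear SEM over a DAG with independent centered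
noises, the population OLS coefficient of `f(X j)` on `X` vanishes at every
coordinate `k` that is neither `j` nor an ancestor of `j`. -/
theorem ancestor_regression_nonancestor_zero
    {Ω : Type*} [MeasurableSpace Ω] (μ : Measure Ω) [IsProbabilityMeasure μ]
    (p : ℕ) (E : Fin p → Fin p → Prop)
    (hacyc : ∀ v, ¬ Relation.TransGen E v v)
    (θ : Fin p → Fin p → ℝ)
    (hθ : ∀ j k, θ j k ≠ 0 → E k j)
    (Ψ X : Fin p → Ω → ℝ)
    (hΨmeas : ∀ l, Measurable (Ψ l)) (hXmeas : ∀ l, Measurable (X l))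
    (hindep : iIndepFun Ψ μ)
    (hcent : ∀ l, ∫ a, Ψ l a ∂μ = 0)
    (hL2 : ∀ l, MemLp (Ψ l) 2 μ)
    (hvarpos : ∀ l, 0 < ∫ a, (Ψ l a) ^ 2 ∂μ)
    (hSEM : ∀ i, ∀ᵐ a ∂μ, X i a = Ψ i a + ∑ k, θ i k * X k a)
    (Sx : Matrix (Fin p) (Fin p) ℝ)
    (hS : Sx = Matrix.of fun i l => ∫ a, X i a * X l a ∂μ)
    (hSinv : IsUnit Sx.det)
    (j : Fin p) (f : ℝ → ℝ) (hf : Measurable f)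
    (hfL2 : MemLp (fun a => f (X j a)) 2 μ)
    (k : Fin p) (hkj : k ≠ j) (hkanc : ¬ Relation.TransGen E k j) :
    Sx⁻¹.mulVec (fun i => ∫ a, X i a * f (X j a) ∂μ) k = 0 :=
  ancestor_regression_nonancestor_zero_general μ p E hacyc θ hθ Ψ X hΨmeas hindep hcent hL2 hvarpos
    hSEM Sx hS hSinv j f hf hfL2 k hkj hkanc
end

section
/- In a linear SEM over a DAG, let $k \in \mathrm{AN}(j)$ with $\mathrm{CH}^{\to j}(k) = \{l\}$ and suppose $\Psi_l \stackrel{d}{=} \theta_{l,k}\Psi_k$. Then the population OLS coefficient $\beta^{f,j}_k = 0$ for any measurable $f$ with the relevant moments finite. -/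
/-!
Solving the SEM gives `X = M Ψ` with `M = (1 - Θ)⁻¹`, whose `(i, r)` entry vanishes unless `r`
is an ancestor of `i` or `r = i`. Hence `E(XXᵀ) = M D Mᵀ` with `D = diag σ²`, `E{X f(X_j)} = M I`
with `I_r = E{Ψ_r f(X_j)}`, and `β^{f,j} = (1 - Θ)ᵀ D⁻¹ I`, i.e.
`β_k = I_k / σ²_k - ∑_r θ_{r,k} I_r / σ²_r`. A noise `Ψ_r` with `r` not an ancestor of `j` is
independent of `X_j`, so `I_r = 0`, and `l` is the only child of `k` left in the sum. Finally
`X_j` depends on `Ψ_k, Ψ_l` only through `θ_{l,k} Ψ_k + Ψ_l`, so exchanging the i.i.d. pair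
`(θ_{l,k} Ψ_k, Ψ_l)` gives `I_l = θ_{l,k} I_k`, while `σ²_l = θ_{l,k}² σ²_k`: the two terms cancel.
-/

open MeasureTheory ProbabilityTheory Matrix Relation

theorem wellFounded_transGen_of_acyclic {n : Type*} [Finite n] {E : n → n → Prop}
    (hacyc : ∀ v, ¬ TransGen E v v) : WellFounded (TransGen E) :=
  haveI : Std.Irrefl (TransGen E) := ⟨hacyc⟩
  Finite.wellFounded_of_trans_of_irrefl _

section WeightedDAG

variable {n K : Type*} [Fintype n] [DecidableEq n] [Field K]
  {E : n → n → Prop} {θ : Matrix n n K}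

theorem isUnit_one_sub_of_acyclic (hacyc : ∀ v, ¬ TransGen E v v)
    (hθ : ∀ i m, θ i m ≠ 0 → E m i) : IsUnit (1 - θ) := by
  have hker : ∀ v : n → K, (1 - θ) *ᵥ v = 0 → v = 0 := by
    intro v hv
    rw [sub_mulVec, one_mulVec, sub_eq_zero] at hv
    funext i
    induction i using (wellFounded_transGen_of_acyclic hacyc).induction with
    | _ i ih =>
      rw [congrFun hv i, mulVec, dotProduct, Pi.zero_apply]
      refine Finset.sum_eq_zero fun m _ => ?_
      by_cases hm : θ i m = 0
      · rw [hm, zero_mul]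
      · rw [ih m (.single (hθ i m hm)), Pi.zero_apply, mul_zero]
  rw [← mulVec_injective_iff_isUnit]
  intro v w hvw
  exact sub_eq_zero.1 (hker _ (by rw [mulVec_sub, hvw, sub_self]))

theorem reflTransGen_of_inv_one_sub_apply_ne_zero (hacyc : ∀ v, ¬ TransGen E v v)
    (hθ : ∀ i m, θ i m ≠ 0 → E m i) {i r : n} (h : (1 - θ)⁻¹ i r ≠ 0) :
    ReflTransGen E r i := by
  have hunit := (isUnit_iff_isUnit_det _).1 (isUnit_one_sub_of_acyclic hacyc hθ)
  have hrec : (1 - θ)⁻¹ = θ * (1 - θ)⁻¹ + 1 := by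
    have h1 := mul_nonsing_inv _ hunit
    rwa [sub_mul, Matrix.one_mul, sub_eq_iff_eq_add'] at h1
  induction i using (wellFounded_transGen_of_acyclic hacyc).induction with
  | _ i ih =>
    by_cases hir : i = r
    · exact hir ▸ .refl
    rw [hrec, Matrix.add_apply, one_apply_ne hir, add_zero, mul_apply] at h
    obtain ⟨m, -, hm⟩ := Finset.exists_ne_zero_of_sum_ne_zero h
    have him := hθ i m (left_ne_zero_of_mul hm)
    exact (ih m (.single him) (right_ne_zero_of_mul hm)).tail him

omit [DecidableEq n] in
theorem sum_apply_mul_eq_of_unique_child (hθ : ∀ i m, θ i m ≠ 0 → E m i) {w : n → K}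
    {j k l : n} (hw : ∀ r, w r ≠ 0 → ReflTransGen E r j)
    (hchild : ∀ m, E k m → ReflTransGen E m j → m = l) :
    ∑ r, θ r k * w r = θ l k * w l := by
  refine Finset.sum_eq_single l (fun r _ hrl => ?_) (by simp)
  by_contra h
  exact hrl (hchild r (hθ r k (left_ne_zero_of_mul h)) (hw r (right_ne_zero_of_mul h)))

theorem inv_one_sub_apply_eq_of_unique_child (hacyc : ∀ v, ¬ TransGen E v v)
    (hθ : ∀ i m, θ i m ≠ 0 → E m i) {j k l : n} (hjk : j ≠ k)
    (hchild : ∀ m, E k m → ReflTransGen E m j → m = l) :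
    (1 - θ)⁻¹ j k = θ l k * (1 - θ)⁻¹ j l := by
  have hunit := (isUnit_iff_isUnit_det _).1 (isUnit_one_sub_of_acyclic hacyc hθ)
  have hrec : (1 - θ)⁻¹ = (1 - θ)⁻¹ * θ + 1 := by
    have h1 := nonsing_inv_mul _ hunit
    rwa [mul_sub, Matrix.mul_one, sub_eq_iff_eq_add'] at h1
  conv_lhs => rw [hrec, Matrix.add_apply, one_apply_ne hjk, add_zero, mul_apply]
  simp_rw [mul_comm ((1 - θ)⁻¹ j _)]
  exact sum_apply_mul_eq_of_unique_child hθ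
    (fun r => reflTransGen_of_inv_one_sub_apply_ne_zero hacyc hθ) hchild

theorem transpose_one_sub_mulVec_apply (w : n → K) (k : n) :
    ((1 - θ)ᵀ *ᵥ w) k = w k - ∑ r, θ r k * w r := by
  simp [mulVec, dotProduct, sub_mul, Finset.sum_sub_distrib, one_apply]

theorem inv_mul_diagonal_mul_transpose_mulVec_mulVec {A B : Matrix n n K} (hAB : A * B = 1)
    {d : n → K} (hd : ∀ i, d i ≠ 0) (v : n → K) :
    (B * diagonal d * Bᵀ)⁻¹ *ᵥ (B *ᵥ v) = Aᵀ *ᵥ fun i => v i / d i := by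
  have hinv : (B * diagonal d * Bᵀ)⁻¹ = Aᵀ * diagonal d⁻¹ * A := by
    refine inv_eq_left_inv ?_
    calc Aᵀ * diagonal d⁻¹ * A * (B * diagonal d * Bᵀ)
        = Aᵀ * (diagonal d⁻¹ * (A * B) * diagonal d) * Bᵀ := by simp only [Matrix.mul_assoc]
      _ = (B * A)ᵀ := by
        rw [hAB, Matrix.mul_one, diagonal_mul_diagonal, transpose_mul]
        simp [hd]
      _ = 1 := by rw [mul_eq_one_comm.1 hAB, transpose_one]
  rw [hinv, mulVec_mulVec, Matrix.mul_assoc, hAB, Matrix.mul_one, ← mulVec_mulVec]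
  congr 1
  funext i
  rw [mulVec_diagonal, Pi.inv_apply, inv_mul_eq_div]

end WeightedDAG

namespace ProbabilityTheory

variable {Ω ι : Type*} [MeasurableSpace Ω] {μ : Measure Ω} [Fintype ι] {Ψ : ι → Ω → ℝ}

theorem ae_eq_inv_one_sub_mulVec_of_linearSEM [DecidableEq ι] {X : ι → Ω → ℝ}
    {θ : Matrix ι ι ℝ} (hunit : IsUnit (1 - θ))
    (hSEM : ∀ i, ∀ᵐ a ∂μ, X i a = Ψ i a + ∑ m, θ i m * X m a) :
    ∀ᵐ a ∂μ, (fun i => X i a) = (1 - θ)⁻¹ *ᵥ fun i => Ψ i a := by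
  filter_upwards [ae_all_iff.2 hSEM] with a ha
  have hsolve : (1 - θ) *ᵥ (fun i => X i a) = fun i => Ψ i a := by
    funext i
    rw [sub_mulVec, one_mulVec, Pi.sub_apply, ha i]
    simp [mulVec, dotProduct]
  rw [← hsolve, mulVec_mulVec, nonsing_inv_mul _ ((isUnit_iff_isUnit_det _).1 hunit),
    one_mulVec]

theorem integral_mulVec_mul {m : Type*} (M : Matrix m ι ℝ) {Y : Ω → ℝ}
    (hY : ∀ r, Integrable (fun a => Ψ r a * Y a) μ) (i : m) :
    ∫ a, (M *ᵥ fun r => Ψ r a) i * Y a ∂μ = (M *ᵥ fun r => ∫ a, Ψ r a * Y a ∂μ) i := by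
  simp only [mulVec, dotProduct, Finset.sum_mul, mul_assoc]
  rw [integral_finsetSum _ fun r _ => (hY r).const_mul (M i r)]
  simp only [integral_const_mul]

omit [Fintype ι] in
theorem iIndepFun.integral_mul_eq_diagonal [IsProbabilityMeasure μ]
    [DecidableEq ι] (hindep : iIndepFun Ψ μ) (hmeas : ∀ r, Measurable (Ψ r))
    (hcent : ∀ r, ∫ a, Ψ r a ∂μ = 0) :
    (Matrix.of fun r s => ∫ a, Ψ r a * Ψ s a ∂μ) = diagonal fun r => ∫ a, Ψ r a ^ 2 ∂μ := by
  ext r s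
  rw [of_apply]
  by_cases hrs : r = s
  · simp [hrs, sq]
  · rw [diagonal_apply_ne _ hrs, (hindep.indepFun hrs).integral_fun_mul_eq_mul_integral
      (hmeas r).aestronglyMeasurable (hmeas s).aestronglyMeasurable, hcent, zero_mul]

theorem iIndepFun.integral_mulVec_mul_mulVec [IsProbabilityMeasure μ]
    [DecidableEq ι] (hindep : iIndepFun Ψ μ) {m : Type*} (M : Matrix m ι ℝ)
    (hmeas : ∀ r, Measurable (Ψ r)) (hcent : ∀ r, ∫ a, Ψ r a ∂μ = 0)
    (hL2 : ∀ r, MemLp (Ψ r) 2 μ) (i i' : m) :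
    ∫ a, (M *ᵥ fun r => Ψ r a) i * (M *ᵥ fun r => Ψ r a) i' ∂μ
      = (M * diagonal (fun r => ∫ a, Ψ r a ^ 2 ∂μ) * Mᵀ) i i' := by
  have hint : ∀ r s, Integrable (fun a => Ψ r a * Ψ s a) μ :=
    fun r s => (hL2 r).integrable_mul (hL2 s)
  have hrow : ∀ r, Integrable (fun a => Ψ r a * (M *ᵥ fun s => Ψ s a) i') μ := by
    intro r
    simp only [mulVec, dotProduct, Finset.mul_sum]
    exact integrable_finsetSum _ fun s _ => by
      simpa only [mul_left_comm] using (hint r s).const_mul (M i' s)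
  rw [integral_mulVec_mul M hrow]
  have hcol : ∀ r, ∫ a, Ψ r a * (M *ᵥ fun s => Ψ s a) i' ∂μ
      = (M *ᵥ fun s => ∫ a, Ψ s a * Ψ r a ∂μ) i' := by
    intro r
    simp only [mul_comm (Ψ r _)]
    exact integral_mulVec_mul M (fun s => hint s r) i'
  have hentry : ∀ s r, ∫ a, Ψ s a * Ψ r a ∂μ = diagonal (fun r => ∫ a, Ψ r a ^ 2 ∂μ) s r :=
    fun s r => by rw [← hindep.integral_mul_eq_diagonal hmeas hcent, of_apply]
  simp only [hcol, hentry]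
  simp [mulVec, dotProduct, mul_apply, diagonal_apply, mul_comm, mul_left_comm]

theorem iIndepFun.integral_mul_comp_dotProduct_eq_zero [IsProbabilityMeasure μ]
    [DecidableEq ι] (hindep : iIndepFun Ψ μ) (hmeas : ∀ r, Measurable (Ψ r)) {r : ι}
    (hcent : ∫ a, Ψ r a ∂μ = 0) {c : ι → ℝ} (hc : c r = 0) {f : ℝ → ℝ} (hf : Measurable f) :
    ∫ a, Ψ r a * f (c ⬝ᵥ fun s => Ψ s a) ∂μ = 0 := by
  set S := Finset.univ.filter (c · ≠ 0)
  have hrS : r ∉ S := by simp [S, hc]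
  set g : (S → ℝ) → ℝ := fun x => f (∑ s : S, c s * x s)
  have hdot : ∀ a, f (c ⬝ᵥ fun s => Ψ s a) = g fun s => Ψ s a := by
    intro a
    rw [dotProduct, ← Finset.sum_filter_of_ne fun s _ hs => left_ne_zero_of_mul hs,
      ← Finset.sum_coe_sort]
  have hg : Measurable g :=
    hf.comp (Finset.measurable_sum _ fun s _ => (measurable_pi_apply s).const_mul _)
  have hind : IndepFun (Ψ r) (fun a => g fun s : S => Ψ s a) μ := by
    have := (hindep.indepFun_finset {r} S (Finset.disjoint_singleton_left.2 hrS) hmeas).comp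
      (φ := fun x => x ⟨r, Finset.mem_singleton_self r⟩)
      (measurable_pi_apply (X := fun _ => ℝ) _) hg
    exact this
  simp_rw [hdot]
  rw [hind.integral_fun_mul_eq_mul_integral (hmeas r).aestronglyMeasurable
    (hg.comp (measurable_pi_lambda _ fun s => hmeas s)).aestronglyMeasurable, hcent, zero_mul]

theorem IdentDistrib.integral_mul_comp_add_comm {β : Type*} [MeasurableSpace β]
    [IsFiniteMeasure μ] {U V : Ω → ℝ} {W : Ω → β} (hUV : IdentDistrib U V μ μ)
    (hind : IndepFun U V μ) (hindW : IndepFun (fun a => (U a, V a)) W μ) (hW : AEMeasurable W μ)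
    {h : ℝ × β → ℝ} (hh : Measurable h) :
    ∫ a, V a * h (U a + V a, W a) ∂μ = ∫ a, U a * h (U a + V a, W a) ∂μ := by
  have hU := hUV.aemeasurable_fst
  have hV := hUV.aemeasurable_snd
  have hswap : IdentDistrib (fun a => ((U a, V a), W a)) (fun a => ((V a, U a), W a)) μ μ :=
    { aemeasurable_fst := (hU.prodMk hV).prodMk hW
      aemeasurable_snd := (hV.prodMk hU).prodMk hW
      map_eq := by
        rw [(indepFun_iff_map_prod_eq_prod_map_map (hU.prodMk hV) hW).1 hindW,
          (indepFun_iff_map_prod_eq_prod_map_map (hV.prodMk hU) hW).1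
            (hindW.comp measurable_swap measurable_id),
          (indepFun_iff_map_prod_eq_prod_map_map hU hV).1 hind,
          (indepFun_iff_map_prod_eq_prod_map_map hV hU).1 hind.symm, hUV.map_eq] }
  have hH : Measurable fun q : (ℝ × ℝ) × β => q.1.2 * h (q.1.1 + q.1.2, q.2) := by fun_prop
  simpa [Function.comp_def, add_comm] using (hswap.comp hH).integral_eq

theorem iIndepFun.integral_mul_comp_dotProduct_swap [IsProbabilityMeasure μ]
    [DecidableEq ι] (hindep : iIndepFun Ψ μ) (hmeas : ∀ r, Measurable (Ψ r)) {k l : ι}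
    (hkl : k ≠ l) {t : ℝ} (hdist : IdentDistrib (fun a => t * Ψ k a) (Ψ l) μ μ) {c : ι → ℝ}
    (hc : c k = t * c l) {f : ℝ → ℝ} (hf : Measurable f) :
    ∫ a, Ψ l a * f (c ⬝ᵥ fun s => Ψ s a) ∂μ = t * ∫ a, Ψ k a * f (c ⬝ᵥ fun s => Ψ s a) ∂μ := by
  set T : Finset ι := {k, l}ᶜ
  set h : ℝ × (T → ℝ) → ℝ := fun q => f (c l * q.1 + ∑ s : T, c s * q.2 s)
  have hdot : ∀ a, f (c ⬝ᵥ fun s => Ψ s a) = h (t * Ψ k a + Ψ l a, fun s : T => Ψ s a) := by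
    intro a
    rw [dotProduct, ← Finset.sum_add_sum_compl {k, l}, Finset.sum_pair hkl, hc,
      ← Finset.sum_coe_sort T]
    simp only [h]
    congr 1
    ring
  have hindW : IndepFun (fun a => (t * Ψ k a, Ψ l a)) (fun a (s : T) => Ψ s a) μ := by
    have := (hindep.indepFun_finset {k, l} T disjoint_compl_right hmeas).comp
      (φ := fun x => (t * x ⟨k, by simp⟩, x ⟨l, by simp⟩))
      (((measurable_pi_apply (X := fun _ => ℝ) _).const_mul t).prodMk
        (measurable_pi_apply (X := fun _ => ℝ) _)) measurable_id
    exact this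
  have hswap := hdist.integral_mul_comp_add_comm
    ((hindep.indepFun hkl).comp (measurable_const_mul t) measurable_id) hindW
    (by fun_prop) (by fun_prop : Measurable h)
  simp_rw [hdot, hswap, mul_assoc, integral_const_mul]

theorem IdentDistrib.integral_sq_eq_sq_mul {U V : Ω → ℝ} {t : ℝ}
    (h : IdentDistrib (fun a => t * U a) V μ μ) :
    ∫ a, V a ^ 2 ∂μ = t ^ 2 * ∫ a, U a ^ 2 ∂μ := by
  have hsq := (h.comp (measurable_id.pow_const 2)).integral_eq
  simp only [Function.comp_apply, id, mul_pow, integral_const_mul] at hsq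
  exact hsq.symm

theorem inv_covariance_mulVec_cross_moment_of_linearSEM [IsProbabilityMeasure μ]
    [DecidableEq ι] {X : ι → Ω → ℝ} {θ : Matrix ι ι ℝ} (hunit : IsUnit (1 - θ))
    (hindep : iIndepFun Ψ μ) (hmeas : ∀ r, Measurable (Ψ r)) (hcent : ∀ r, ∫ a, Ψ r a ∂μ = 0)
    (hL2 : ∀ r, MemLp (Ψ r) 2 μ) (hvarpos : ∀ r, 0 < ∫ a, Ψ r a ^ 2 ∂μ)
    (hSEM : ∀ i, ∀ᵐ a ∂μ, X i a = Ψ i a + ∑ m, θ i m * X m a) {Y : Ω → ℝ} (hY : MemLp Y 2 μ) :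
    (Matrix.of fun i m => ∫ a, X i a * X m a ∂μ)⁻¹ *ᵥ (fun i => ∫ a, X i a * Y a ∂μ)
      = (1 - θ)ᵀ *ᵥ fun r => (∫ a, Ψ r a * Y a ∂μ) / ∫ a, Ψ r a ^ 2 ∂μ := by
  have hX := ae_eq_inv_one_sub_mulVec_of_linearSEM hunit hSEM
  have hcov : (Matrix.of fun i m => ∫ a, X i a * X m a ∂μ)
      = (1 - θ)⁻¹ * diagonal (fun r => ∫ a, Ψ r a ^ 2 ∂μ) * (1 - θ)⁻¹ᵀ := by
    ext i m
    rw [of_apply, ← hindep.integral_mulVec_mul_mulVec _ hmeas hcent hL2]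
    exact integral_congr_ae (hX.mono fun a ha => by simp only [← ha])
  have hcross : (fun i => ∫ a, X i a * Y a ∂μ)
      = (1 - θ)⁻¹ *ᵥ fun r => ∫ a, Ψ r a * Y a ∂μ := by
    funext i
    rw [← integral_mulVec_mul _ fun r => (hL2 r).integrable_mul hY]
    exact integral_congr_ae (hX.mono fun a ha => by simp only [← ha])
  rw [hcov, hcross, inv_mul_diagonal_mul_transpose_mulVec_mulVec
    (mul_nonsing_inv _ ((isUnit_iff_isUnit_det _).1 hunit)) fun r => (hvarpos r).ne']

end ProbabilityTheory

theorem equal_distribution_beta_zero_general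
    {Ω : Type*} [MeasurableSpace Ω] (μ : Measure Ω) [IsProbabilityMeasure μ]
    (p : ℕ) (E : Fin p → Fin p → Prop)
    (hacyc : ∀ v, ¬ Relation.TransGen E v v)
    (θ : Fin p → Fin p → ℝ)
    (hθ : ∀ i m, θ i m ≠ 0 → E m i)
    (Ψ X : Fin p → Ω → ℝ)
    (hΨmeas : ∀ m, Measurable (Ψ m))
    (hindep : iIndepFun Ψ μ)
    (hcent : ∀ m, ∫ a, Ψ m a ∂μ = 0)
    (hL2 : ∀ m, MemLp (Ψ m) 2 μ)
    (hvarpos : ∀ m, 0 < ∫ a, (Ψ m a) ^ 2 ∂μ)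
    (hSEM : ∀ i, ∀ᵐ a ∂μ, X i a = Ψ i a + ∑ m, θ i m * X m a)
    (Sx : Matrix (Fin p) (Fin p) ℝ)
    (hS : Sx = Matrix.of fun i m => ∫ a, X i a * X m a ∂μ)
    (j k l : Fin p)
    -- `CH^{→j}(k) = {l}`
    (hchl : E k l ∧ (Relation.TransGen E l j ∨ l = j))
    (hchonly : ∀ m, E k m → (Relation.TransGen E m j ∨ m = j) → m = l)
    (hdist : Measure.map (fun a => θ l k * Ψ k a) μ = Measure.map (Ψ l) μ)
    (f : ℝ → ℝ) (hf : Measurable f)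
    (hfL2 : MemLp (fun a => f (X j a)) 2 μ) :
    Sx⁻¹.mulVec (fun i => ∫ a, X i a * f (X j a) ∂μ) k = 0 := by
  set θm : Matrix (Fin p) (Fin p) ℝ := Matrix.of θ
  have hθm : ∀ i m, θm i m ≠ 0 → E m i := hθ
  have hkl : k ≠ l := fun h => hacyc k (.single (h ▸ hchl.1))
  have hjk : j ≠ k := by
    rintro rfl
    rcases hchl.2 with h | rfl
    exacts [hacyc j (.head hchl.1 h), hkl rfl]
  have hchild : ∀ m, E k m → ReflTransGen E m j → m = l := fun m hkm hmj =>
    hchonly m hkm ((reflTransGen_iff_eq_or_transGen.1 hmj).symm.imp id Eq.symm)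
  have hunit := isUnit_one_sub_of_acyclic hacyc hθm
  have hXj : ∀ᵐ a ∂μ, X j a = (1 - θm)⁻¹ j ⬝ᵥ fun s => Ψ s a :=
    (ae_eq_inv_one_sub_mulVec_of_linearSEM hunit hSEM).mono fun a ha => congrFun ha j
  set I : Fin p → ℝ := fun r => ∫ a, Ψ r a * f (X j a) ∂μ
  have hI : ∀ r, I r = ∫ a, Ψ r a * f ((1 - θm)⁻¹ j ⬝ᵥ fun s => Ψ s a) ∂μ :=
    fun r => integral_congr_ae (hXj.mono fun a ha => by simp only [ha])
  have hid : IdentDistrib (fun a => θ l k * Ψ k a) (Ψ l) μ μ :=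
    ⟨by fun_prop, by fun_prop, hdist⟩
  have hσl := hid.integral_sq_eq_sq_mul
  have hθlk : θ l k ≠ 0 := fun h => (hvarpos l).ne' (by simp [hσl, h])
  have hIl : I l = θ l k * I k := by
    rw [hI, hI]
    exact hindep.integral_mul_comp_dotProduct_swap hΨmeas hkl hid
      (inv_one_sub_apply_eq_of_unique_child hacyc hθm hjk hchild) hf
  have hI0 : ∀ r, ¬ ReflTransGen E r j → I r = 0 := fun r hrj =>
    (hI r).trans (hindep.integral_mul_comp_dotProduct_eq_zero hΨmeas (hcent r)
      (not_imp_comm.1 (reflTransGen_of_inv_one_sub_apply_ne_zero hacyc hθm) hrj) hf)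
  have hw : ∀ r, I r / ∫ a, Ψ r a ^ 2 ∂μ ≠ 0 → ReflTransGen E r j :=
    fun r hr => not_imp_comm.1 (hI0 r) (left_ne_zero_of_mul hr)
  rw [hS, inv_covariance_mulVec_cross_moment_of_linearSEM hunit hindep hΨmeas hcent hL2 hvarpos
    hSEM hfL2]
  change ((1 - θm)ᵀ *ᵥ fun r => I r / ∫ a, Ψ r a ^ 2 ∂μ) k = 0
  rw [transpose_one_sub_mulVec_apply, sum_apply_mul_eq_of_unique_child hθm hw hchild, hIl, hσl]
  simp only [θm, of_apply]
  field_simp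
  ring

/-- Proposition 2: In a linear SEM over a DAG, if `k` is an
ancestor of `j`, the only child of `k` on directed paths to `j` is `l`, and
`Ψ l` has the same distribution as `θ l k • Ψ k`, then `β^{f,j}_k = 0`. -/
theorem equal_distribution_beta_zero
    {Ω : Type*} [MeasurableSpace Ω] (μ : Measure Ω) [IsProbabilityMeasure μ]
    (p : ℕ) (E : Fin p → Fin p → Prop)
    (hacyc : ∀ v, ¬ Relation.TransGen E v v)
    (θ : Fin p → Fin p → ℝ)
    (hθ : ∀ i m, θ i m ≠ 0 → E m i)
    (Ψ X : Fin p → Ω → ℝ)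
    (hΨmeas : ∀ m, Measurable (Ψ m)) (hXmeas : ∀ m, Measurable (X m))
    (hindep : iIndepFun Ψ μ)
    (hcent : ∀ m, ∫ a, Ψ m a ∂μ = 0)
    (hL2 : ∀ m, MemLp (Ψ m) 2 μ)
    (hvarpos : ∀ m, 0 < ∫ a, (Ψ m a) ^ 2 ∂μ)
    (hSEM : ∀ i, ∀ᵐ a ∂μ, X i a = Ψ i a + ∑ m, θ i m * X m a)
    (Sx : Matrix (Fin p) (Fin p) ℝ)
    (hS : Sx = Matrix.of fun i m => ∫ a, X i a * X m a ∂μ)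
    (hSinv : IsUnit Sx.det)
    (j k l : Fin p) (hkanc : Relation.TransGen E k j)
    -- `CH^{→j}(k) = {l}`
    (hchl : E k l ∧ (Relation.TransGen E l j ∨ l = j))
    (hchonly : ∀ m, E k m → (Relation.TransGen E m j ∨ m = j) → m = l)
    (hdist : Measure.map (fun a => θ l k * Ψ k a) μ = Measure.map (Ψ l) μ)
    (f : ℝ → ℝ) (hf : Measurable f)
    (hfL2 : MemLp (fun a => f (X j a)) 2 μ)
    (hprod : ∀ i, Integrable (fun a => X i a * f (X j a)) μ) :
    Sx⁻¹.mulVec (fun i => ∫ a, X i a * f (X j a) ∂μ) k = 0 :=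
  equal_distribution_beta_zero_general μ p E hacyc θ hθ Ψ X hΨmeas hindep hcent hL2 hvarpos hSEM Sx
    hS j k l hchl hchonly hdist f hf hfL2
end
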